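/- arXiv:2206.14627 — 5 statements merged into one kernel-verified Lean document; each statement's English description precedes it below -/
import Mathlib

section
/- Let d ≥ 1 and g(r) := Vol(B(0, (√d/2)·r) ∩ [-1/2,1/2]^d). Then for every ε > 0 sufficiently small, g(1) - g(1-ε) ≥ ε^d. -/
/-! The points of the cube all of whose coordinates satisfy `(1 - ε)/2 ≤ |xᵢ| < 1/2` have
Euclidean norm in `[(√d/2)(1 - ε), √d/2)`, so they lie in the ball of radius `(√d/2)·1` but not in
that of radius `(√d/2)(1 - ε)`. Each coordinate ranges over two intervals of total length `ε`,
so this product set has volume exactly `ε^d`. -/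

open MeasureTheory Set

def symmShell (a b : ℝ) : Set ℝ := Ioc (-b) (-a) ∪ Ico a b

lemma le_abs_and_abs_lt_of_mem_symmShell {a b t : ℝ} (ha : 0 ≤ a) (ht : t ∈ symmShell a b) :
    a ≤ |t| ∧ |t| < b := by
  rcases ht with ⟨h₁, h₂⟩ | ⟨h₁, h₂⟩
  · rw [abs_of_nonpos (by linarith)]
    constructor <;> linarith
  · rw [abs_of_nonneg (by linarith)]
    exact ⟨h₁, h₂⟩

lemma volume_symmShell {a b : ℝ} (ha : 0 < a) (hab : a ≤ b) :
    volume (symmShell a b) = ENNReal.ofReal (2 * (b - a)) := by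
  have hdisj : Disjoint (Ioc (-b) (-a)) (Ico a b) :=
    disjoint_left.2 fun t ⟨_, h₁⟩ ⟨h₂, _⟩ => by linarith
  rw [symmShell, measure_union hdisj measurableSet_Ico, Real.volume_Ioc, Real.volume_Ico,
    ← ENNReal.ofReal_add (by linarith) (by linarith)]
  ring_nf

variable {ι : Type*} [Fintype ι]

lemma sqrt_card_mul_le_sqrt_sum_sq {a : ℝ} (ha : 0 ≤ a) {x : ι → ℝ} (hx : ∀ i, a ≤ |x i|) :
    √(Fintype.card ι) * a ≤ √(∑ i, x i ^ 2) := by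
  rw [← Real.sqrt_sq ha, ← Real.sqrt_mul (Nat.cast_nonneg _)]
  gcongr
  calc (Fintype.card ι : ℝ) * a ^ 2 = ∑ _i : ι, a ^ 2 := by simp
    _ ≤ ∑ i, x i ^ 2 := Finset.sum_le_sum fun i _ => by
        simpa only [sq_abs] using pow_le_pow_left₀ ha (hx i) 2

lemma sqrt_sum_sq_lt_sqrt_card_mul [Nonempty ι] {b : ℝ} {x : ι → ℝ} (hx : ∀ i, |x i| < b) :
    √(∑ i, x i ^ 2) < √(Fintype.card ι) * b := by
  have hb : 0 < b := (abs_nonneg _).trans_lt (hx (Classical.arbitrary ι))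
  rw [← Real.sqrt_sq hb.le, ← Real.sqrt_mul (Nat.cast_nonneg _)]
  apply Real.sqrt_lt_sqrt (Finset.sum_nonneg fun i _ => sq_nonneg _)
  calc ∑ i, x i ^ 2 < ∑ _i : ι, b ^ 2 := Finset.sum_lt_sum_of_nonempty Finset.univ_nonempty
        fun i _ => by simpa only [sq_abs] using pow_lt_pow_left₀ (hx i) (abs_nonneg _) two_ne_zero
    _ = Fintype.card ι * b ^ 2 := by simp

variable (ι) in
def cubeBall (r : ℝ) : Set (ι → ℝ) :=
  {x | (∀ i, |x i| ≤ 1/2) ∧ √(∑ i, x i ^ 2) < √(Fintype.card ι) / 2 * r}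

lemma measurableSet_cubeBall (r : ℝ) : MeasurableSet (cubeBall ι r) := by
  rw [cubeBall, ofPred_and, ofPred_forall]
  refine MeasurableSet.inter ?_ (measurableSet_lt ?_ measurable_const)
  · exact MeasurableSet.iInter fun i => measurableSet_le (by fun_prop) measurable_const
  · exact Real.continuous_sqrt.measurable.comp (by fun_prop)

lemma volume_cubeBall_ne_top (r : ℝ) : volume (cubeBall ι r) ≠ ⊤ := by
  refine ((Metric.isBounded_Icc (-1/2 : ι → ℝ) (1/2)).subset fun x hx => ?_).measure_lt_top.ne
  exact ⟨fun i => by simpa [neg_div] using (abs_le.1 (hx.1 i)).1, fun i => (abs_le.1 (hx.1 i)).2⟩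

lemma cubeBall_mono {r s : ℝ} (h : r ≤ s) : cubeBall ι r ⊆ cubeBall ι s :=
  fun _ hx => ⟨hx.1, hx.2.trans_le (by gcongr)⟩

lemma pi_symmShell_subset_cubeBall_sdiff [Nonempty ι] {ε : ℝ} (hε : ε ≤ 1) :
    univ.pi (fun _ : ι => symmShell ((1 - ε) / 2) (1 / 2)) ⊆ cubeBall ι 1 \ cubeBall ι (1 - ε) := by
  intro x hx
  have habs i := le_abs_and_abs_lt_of_mem_symmShell (by linarith) (hx i (mem_univ i))
  refine ⟨⟨fun i => (habs i).2.le, ?_⟩, fun hxB => hxB.2.not_ge ?_⟩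
  · simpa [div_eq_mul_inv] using sqrt_sum_sq_lt_sqrt_card_mul fun i => (habs i).2
  · simpa [mul_div_assoc', div_mul_eq_mul_div] using
      sqrt_card_mul_le_sqrt_sum_sq (by linarith) fun i => (habs i).1

lemma volume_real_pi_symmShell {a b : ℝ} (ha : 0 < a) (hab : a ≤ b) :
    volume.real (univ.pi fun _ : ι => symmShell a b) = (2 * (b - a)) ^ Fintype.card ι := by
  rw [measureReal_def, volume_pi_pi, ENNReal.toReal_prod]
  simp only [volume_symmShell ha hab, Finset.prod_const, Finset.card_univ,
    ENNReal.toReal_ofReal (by linarith : 0 ≤ 2 * (b - a))]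

/-- With `g(r) = Vol(B(0,(√d/2)r) ∩ [-1/2,1/2]^d)`, for all sufficiently
small `ε > 0` one has `g(1) - g(1-ε) ≥ ε^d`. -/
theorem stmt_4 (d : ℕ) (hd : 1 ≤ d)
    (g : ℝ → ℝ)
    (hg : ∀ r : ℝ, g r =
      (volume {x : Fin d → ℝ | (∀ i, |x i| ≤ 1/2) ∧
        Real.sqrt (∑ i, x i ^ 2) < Real.sqrt d / 2 * r}).toReal) :
    ∃ ε₀ > (0:ℝ), ∀ ε : ℝ, 0 < ε → ε < ε₀ → g 1 - g (1 - ε) ≥ ε ^ d := by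
  have : Nonempty (Fin d) := ⟨⟨0, hd⟩⟩
  have hg_cubeBall r : g r = volume.real (cubeBall (Fin d) r) := by
    simp [hg, cubeBall, measureReal_def]
  refine ⟨1, one_pos, fun ε hε hε₁ => ?_⟩
  rw [hg_cubeBall, hg_cubeBall, ← measureReal_sdiff (cubeBall_mono (by linarith)) (measurableSet_cubeBall _)
    (volume_cubeBall_ne_top _), ge_iff_le]
  calc ε ^ d = volume.real (univ.pi (fun _ : Fin d => symmShell ((1 - ε) / 2) (1 / 2))) := by
        rw [volume_real_pi_symmShell (by linarith) (by linarith), Fintype.card_fin]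
        ring_nf
    _ ≤ _ := measureReal_mono (pi_symmShell_subset_cubeBall_sdiff hε₁.le)
        (measure_ne_top_of_subset sdiff_subset (volume_cubeBall_ne_top _))
end

section
/- Let d ≥ 1, r > 0 and N ≥ 1. The number of unit hypercubes centered at points of ℤ^d ∩ [-N,N]^d that intersect the boundary sphere ∂B(0,r) (with r ≤ √d·N) is at most c_d·N^{d-1} for a constant c_d depending only on d. -/
/-!
A point `x` on the sphere of radius `r` in dimension `d` has a coordinate `i` with
`d * |x i| ≥ r`. Sort the cubes meeting the sphere by such a coordinate `i` and the sign of
`x i`. Two cubes of one class whose centres agree off `i` contain sphere points `x`, `y` that are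
`1`-close off `i`, so `|x i ^ 2 - y i ^ 2| = |∑_{j ≠ i} (y j ^ 2 - x j ^ 2)| ≤ 2 d r`; as `x i`,
`y i` have the same sign and size at least `r / d`, this gives `|x i - y i| ≤ d ^ 2`. Hence every
line in direction `i` carries at most `d ^ 2 + 2` centres of a class, and the box `[-N, N]^d`
meets `(2N + 1)^(d - 1)` such lines.
-/

open Finset

lemma abs_sub_mul_add_abs_of_nonneg_iff {R : Type*} [CommRing R] [LinearOrder R]
    [IsStrictOrderedRing R] {a b : R} (hab : 0 ≤ a ↔ 0 ≤ b) :
    |a - b| * (|a| + |b|) = |a ^ 2 - b ^ 2| := by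
  have hadd : |a + b| = |a| + |b| := by
    refine (abs_add_eq_add_abs_iff a b).2 ?_
    by_cases ha : 0 ≤ a
    · exact .inl ⟨ha, hab.1 ha⟩
    · exact .inr ⟨(not_le.1 ha).le, (not_le.1 (mt hab.2 ha)).le⟩
  rw [sq_sub_sq, abs_mul, hadd, mul_comm]

section SpherePoints

variable {ι : Type*} [Fintype ι] {x y : ι → ℝ} {r : ℝ}

lemma abs_le_of_sum_sq_eq (hr : 0 ≤ r) (hx : ∑ j, x j ^ 2 = r ^ 2) (j : ι) : |x j| ≤ r :=
  abs_le_of_sq_le_sq (hx ▸ single_le_sum (fun k _ => sq_nonneg (x k)) (mem_univ j)) hr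

lemma exists_le_card_mul_abs_of_sum_sq_eq (hr : 0 < r) (hx : ∑ j, x j ^ 2 = r ^ 2) :
    ∃ i, r ≤ Fintype.card ι * |x i| := by
  have hne : (univ : Finset ι).Nonempty := by
    by_contra h
    rw [not_nonempty_iff_eq_empty.1 h, sum_empty] at hx
    exact (pow_pos hr 2).ne' hx.symm
  obtain ⟨i, -, hi⟩ := exists_le_of_sum_le (f := fun _ => r ^ 2)
    (g := fun j => Fintype.card ι * x j ^ 2) hne (by simp [← mul_sum, hx])
  have hcard : (1 : ℝ) ≤ Fintype.card ι := by
    exact_mod_cast Fintype.card_pos_iff.2 ⟨i⟩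
  refine ⟨i, le_of_sq_le_sq ?_ (by positivity)⟩
  calc r ^ 2 ≤ Fintype.card ι * x i ^ 2 := hi
    _ ≤ (Fintype.card ι * |x i|) ^ 2 := by rw [mul_pow, sq_abs]; gcongr; nlinarith

lemma abs_sq_sub_sq_le (hr : 0 ≤ r) (hx : ∑ j, x j ^ 2 = r ^ 2) (hy : ∑ j, y j ^ 2 = r ^ 2)
    (i : ι) (hclose : ∀ j ≠ i, |x j - y j| ≤ 1) :
    |x i ^ 2 - y i ^ 2| ≤ 2 * Fintype.card ι * r := by
  classical
  have hsplit : x i ^ 2 - y i ^ 2 = ∑ j ∈ univ.erase i, (y j ^ 2 - x j ^ 2) := by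
    rw [sum_sub_distrib]
    linarith [add_sum_erase univ (fun j => x j ^ 2) (mem_univ i),
      add_sum_erase univ (fun j => y j ^ 2) (mem_univ i)]
  have hterm : ∀ j ∈ univ.erase i, |y j ^ 2 - x j ^ 2| ≤ 2 * r := fun j hj => by
    rw [sq_sub_sq, abs_mul, abs_sub_comm]
    calc |y j + x j| * |x j - y j| ≤ (|y j| + |x j|) * 1 :=
          mul_le_mul (abs_add_le _ _) (hclose j (ne_of_mem_erase hj)) (abs_nonneg _)
            (by positivity)
      _ ≤ 2 * r := by linarith [abs_le_of_sum_sq_eq hr hx j, abs_le_of_sum_sq_eq hr hy j]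
  calc |x i ^ 2 - y i ^ 2| ≤ ∑ j ∈ univ.erase i, |y j ^ 2 - x j ^ 2| :=
        hsplit ▸ abs_sum_le_sum_abs _ _
    _ ≤ #(univ.erase i) * (2 * r) := by simpa using sum_le_sum hterm
    _ ≤ Fintype.card ι * (2 * r) := by gcongr; exact_mod_cast card_erase_le
    _ = 2 * Fintype.card ι * r := by ring

lemma abs_sub_le_of_sum_sq_eq {k : ℝ} (hr : 0 < r) (hx : ∑ j, x j ^ 2 = r ^ 2)
    (hy : ∑ j, y j ^ 2 = r ^ 2) {i : ι} (hxi : r ≤ k * |x i|) (hyi : r ≤ k * |y i|)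
    (hsign : 0 ≤ x i ↔ 0 ≤ y i) (hclose : ∀ j ≠ i, |x j - y j| ≤ 1) :
    |x i - y i| ≤ Fintype.card ι * k := by
  have hk : 0 ≤ k := by
    by_contra hk
    nlinarith [abs_nonneg (x i)]
  refine le_of_mul_le_mul_right ?_ (by positivity : 0 < 2 * r)
  calc |x i - y i| * (2 * r) ≤ |x i - y i| * (k * (|x i| + |y i|)) :=
        mul_le_mul_of_nonneg_left (by linarith) (abs_nonneg _)
    _ = k * |x i ^ 2 - y i ^ 2| := by rw [← abs_sub_mul_add_abs_of_nonneg_iff hsign]; ring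
    _ ≤ k * (2 * Fintype.card ι * r) := by gcongr; exact abs_sq_sub_sq_le hr.le hx hy i hclose
    _ = Fintype.card ι * k * (2 * r) := by ring

end SpherePoints

lemma Int.card_le_of_abs_sub_le {s : Finset ℤ} {m : ℕ} (h : ∀ a ∈ s, ∀ b ∈ s, |a - b| ≤ m) :
    #s ≤ m + 1 := by
  rcases s.eq_empty_or_nonempty with rfl | hs
  · simp
  have hsub : s ⊆ Icc (s.min' hs) (s.min' hs + m) := fun b hb =>
    mem_Icc.2 ⟨min'_le s b hb, by linarith [le_abs_self (b - s.min' hs), h b hb _ (min'_mem s hs)]⟩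
  calc #s ≤ #(Icc (s.min' hs) (s.min' hs + m)) := card_le_card hsub
    _ = m + 1 := by rw [Int.card_Icc]; omega

lemma card_le_of_abs_sub_le_of_eq_off {ι : Type*} [Fintype ι] [DecidableEq ι]
    {s : Finset (ι → ℤ)} {N m : ℕ} (i : ι)
    (hbox : ∀ z ∈ s, ∀ j, |z j| ≤ N)
    (hclose : ∀ z ∈ s, ∀ z' ∈ s, (∀ j ≠ i, z j = z' j) → |z i - z' i| ≤ m) :
    #s ≤ (m + 1) * (2 * N + 1) ^ (Fintype.card ι - 1) := by
  let restrict (z : ι → ℤ) (j : {j // j ≠ i}) : ℤ := z j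
  have heq_off {z z' : ι → ℤ} (h : restrict z = restrict z') : ∀ j ≠ i, z j = z' j :=
    fun j hj => congrFun h ⟨j, hj⟩
  have hfiber : ∀ a, #{z ∈ s | restrict z = a} ≤ m + 1 := fun a => by
    set F := {z ∈ s | restrict z = a}
    have hinj : Set.InjOn (· i) (F : Set (ι → ℤ)) := fun z hz z' hz' hzi => by
      rw [mem_coe, mem_filter] at hz hz'
      funext j
      by_cases hj : j = i
      · exact hj ▸ hzi
      · exact heq_off (hz.2.trans hz'.2.symm) j hj
    rw [← card_image_of_injOn hinj]
    refine Int.card_le_of_abs_sub_le fun a ha b hb => ?_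
    obtain ⟨z, hz, rfl⟩ := mem_image.1 ha
    obtain ⟨z', hz', rfl⟩ := mem_image.1 hb
    rw [mem_filter] at hz hz'
    exact hclose z hz.1 z' hz'.1 (heq_off (hz.2.trans hz'.2.symm))
  calc #s ≤ (m + 1) * #(Fintype.piFinset fun _ : {j // j ≠ i} => Icc (-(N : ℤ)) N) :=
        card_le_mul_card_image_of_maps_to (f := restrict)
          (fun z hz => Fintype.mem_piFinset.2 fun j => mem_Icc.2 (abs_le.1 (hbox z hz j)))
          _ fun a _ => hfiber a
    _ = (m + 1) * (2 * N + 1) ^ (Fintype.card ι - 1) := by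
        rw [Fintype.card_piFinset, prod_const, Int.card_Icc, card_univ,
          Fintype.card_subtype_compl, Fintype.card_subtype_eq]
        congr 2
        omega

section SphereCubes

variable {ι : Type*} [Fintype ι] {N : ℕ} {r : ℝ}

lemma finite_of_forall_abs_le {s : Set (ι → ℤ)} (h : ∀ z ∈ s, ∀ j, |z j| ≤ N) : s.Finite := by
  classical
  exact (Fintype.piFinset fun _ : ι => Icc (-(N : ℤ)) N).finite_toSet.subset fun z hz =>
    Fintype.mem_piFinset.2 fun j => mem_Icc.2 (abs_le.1 (h z hz j))

variable (ι N r)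

def sphereCubeCenters : Set (ι → ℤ) :=
  {z | (∀ i, |z i| ≤ (N : ℤ)) ∧
    ∃ x : ι → ℝ, Real.sqrt (∑ i, x i ^ 2) = r ∧ ∀ i, |x i - (z i : ℝ)| ≤ 1 / 2}

def sphereCubeCentersAlong (i : ι) (b : Bool) : Set (ι → ℤ) :=
  {z | (∀ j, |z j| ≤ (N : ℤ)) ∧ ∃ x : ι → ℝ, ∑ j, x j ^ 2 = r ^ 2 ∧
    (∀ j, |x j - (z j : ℝ)| ≤ 1 / 2) ∧ r ≤ Fintype.card ι * |x i| ∧ (0 ≤ x i ↔ b)}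

variable {ι N r}

lemma abs_sub_le_of_mem_sphereCubeCentersAlong (hr : 0 < r) {i : ι} {b : Bool} {z z' : ι → ℤ}
    (hz : z ∈ sphereCubeCentersAlong ι N r i b) (hz' : z' ∈ sphereCubeCentersAlong ι N r i b)
    (heq : ∀ j ≠ i, z j = z' j) : |z i - z' i| ≤ ((Fintype.card ι ^ 2 + 1 : ℕ) : ℤ) := by
  obtain ⟨-, x, hx, hxz, hxi, hxb⟩ := hz
  obtain ⟨-, y, hy, hyz, hyi, hyb⟩ := hz'
  have hclose : ∀ j ≠ i, |x j - y j| ≤ 1 := fun j hj => by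
    have hxz' := hxz j
    rw [heq j hj] at hxz'
    linarith [abs_sub_le (x j) (z' j) (y j), abs_sub_comm (z' j : ℝ) (y j), hyz j]
  have hxy := abs_sub_le_of_sum_sq_eq hr hx hy hxi hyi (hxb.trans hyb.symm) hclose
  have : |((z i - z' i : ℤ) : ℝ)| ≤ Fintype.card ι ^ 2 + 1 :=
    calc |((z i - z' i : ℤ) : ℝ)| = |(z i - x i) + (x i - y i) + (y i - z' i)| := by
          rw [Int.cast_sub]; congr 1; ring
      _ ≤ |z i - x i| + |x i - y i| + |y i - z' i| := abs_add_three _ _ _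
      _ ≤ 1 / 2 + Fintype.card ι * Fintype.card ι + 1 / 2 := by
          linarith [hxz i, hyz i, abs_sub_comm (z i : ℝ) (x i)]
      _ = Fintype.card ι ^ 2 + 1 := by ring
  exact_mod_cast this

lemma ncard_sphereCubeCentersAlong_le (hr : 0 < r) (i : ι) (b : Bool) :
    (sphereCubeCentersAlong ι N r i b).ncard ≤
      (Fintype.card ι ^ 2 + 2) * (2 * N + 1) ^ (Fintype.card ι - 1) := by
  classical
  obtain ⟨s, hs⟩ := (finite_of_forall_abs_le (s := sphereCubeCentersAlong ι N r i b)
    fun z hz => hz.1).exists_finset_coe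
  have hmem : ∀ z ∈ s, z ∈ sphereCubeCentersAlong ι N r i b := fun z hz => hs ▸ mem_coe.2 hz
  rw [← hs, Set.ncard_coe_finset]
  exact card_le_of_abs_sub_le_of_eq_off (m := Fintype.card ι ^ 2 + 1) i
    (fun z hz => (hmem z hz).1) fun z hz z' hz' =>
      abs_sub_le_of_mem_sphereCubeCentersAlong hr (hmem z hz) (hmem z' hz')

lemma sphereCubeCenters_subset_iUnion (hr : 0 < r) :
    sphereCubeCenters ι N r ⊆ ⋃ p : ι × Bool, sphereCubeCentersAlong ι N r p.1 p.2 := by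
  rintro z ⟨hbox, x, hx, hxz⟩
  have hsum : ∑ j, x j ^ 2 = r ^ 2 := by
    rw [← hx, Real.sq_sqrt (sum_nonneg fun j _ => sq_nonneg (x j))]
  obtain ⟨i, hi⟩ := exists_le_card_mul_abs_of_sum_sq_eq hr hsum
  exact Set.mem_iUnion.2 ⟨(i, decide (0 ≤ x i)), hbox, x, hsum, hxz, hi, by simp⟩

lemma ncard_sphereCubeCenters_le (hr : 0 < r) :
    (sphereCubeCenters ι N r).ncard ≤
      2 * Fintype.card ι * (Fintype.card ι ^ 2 + 2) * (2 * N + 1) ^ (Fintype.card ι - 1) := by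
  have hfin : (⋃ p : ι × Bool, sphereCubeCentersAlong ι N r p.1 p.2).Finite :=
    finite_of_forall_abs_le fun z hz => by
      obtain ⟨p, hp⟩ := Set.mem_iUnion.1 hz
      exact hp.1
  calc (sphereCubeCenters ι N r).ncard
      ≤ (⋃ p : ι × Bool, sphereCubeCentersAlong ι N r p.1 p.2).ncard :=
        Set.ncard_le_ncard (sphereCubeCenters_subset_iUnion hr) hfin
    _ ≤ ∑ p : ι × Bool, (sphereCubeCentersAlong ι N r p.1 p.2).ncard :=
        Set.ncard_iUnion_le_of_fintype _
    _ ≤ ∑ _p : ι × Bool, (Fintype.card ι ^ 2 + 2) * (2 * N + 1) ^ (Fintype.card ι - 1) :=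
        sum_le_sum fun p _ => ncard_sphereCubeCentersAlong_le hr p.1 p.2
    _ = 2 * Fintype.card ι * (Fintype.card ι ^ 2 + 2) * (2 * N + 1) ^ (Fintype.card ι - 1) := by
        rw [sum_const, card_univ, Fintype.card_prod, Fintype.card_bool, smul_eq_mul]; ring

end SphereCubes

theorem stmt_5_general (d : ℕ) :
    ∃ c : ℝ, 0 < c ∧ ∀ N : ℕ, 1 ≤ N → ∀ r : ℝ, 0 < r → r ≤ Real.sqrt d * N →
      ((({z : Fin d → ℤ | (∀ i, |z i| ≤ (N : ℤ)) ∧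
          ∃ x : Fin d → ℝ, Real.sqrt (∑ i, x i ^ 2) = r ∧
            ∀ i, |x i - (z i : ℝ)| ≤ 1/2}).ncard : ℝ))
        ≤ c * (N : ℝ) ^ (d - 1) := by
  refine ⟨(2 * d + 1) * (d ^ 2 + 2) * 3 ^ (d - 1), by positivity, fun N hN r hr _ => ?_⟩
  have hcount := ncard_sphereCubeCenters_le (ι := Fin d) (N := N) hr
  rw [Fintype.card_fin] at hcount
  have h3N : (2 * N + 1 : ℝ) ≤ 3 * N := by
    have : (1 : ℝ) ≤ N := by exact_mod_cast hN
    linarith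
  calc ((sphereCubeCenters (Fin d) N r).ncard : ℝ)
      ≤ 2 * d * (d ^ 2 + 2) * (2 * N + 1) ^ (d - 1) := by exact_mod_cast hcount
    _ ≤ (2 * d + 1) * (d ^ 2 + 2) * (3 * N) ^ (d - 1) := by gcongr; linarith
    _ = (2 * d + 1) * (d ^ 2 + 2) * 3 ^ (d - 1) * N ^ (d - 1) := by rw [mul_pow]; ring

/-- The number of unit hypercubes centred at lattice points of
`ℤ^d ∩ [-N,N]^d` that intersect the sphere `∂B(0,r)` (for `0 < r ≤ √d N`) is at
most `c_d N^{d-1}` for a dimensional constant `c_d`. -/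
theorem stmt_5 (d : ℕ) (hd : 1 ≤ d) :
    ∃ c : ℝ, 0 < c ∧ ∀ N : ℕ, 1 ≤ N → ∀ r : ℝ, 0 < r → r ≤ Real.sqrt d * N →
      ((({z : Fin d → ℤ | (∀ i, |z i| ≤ (N : ℤ)) ∧
          ∃ x : Fin d → ℝ, Real.sqrt (∑ i, x i ^ 2) = r ∧
            ∀ i, |x i - (z i : ℝ)| ≤ 1/2}).ncard : ℝ))
        ≤ c * (N : ℝ) ^ (d - 1) :=
  stmt_5_general d
end

section
/- Let d ≥ 1, N ≥ 1 and r > 0 with r ≤ √d·N. Let W be the number of lattice points of ℤ^d ∩ [-N,N]^d contained in the open ball B(0,r). Then |W - Vol(B(0,r) ∩ [-N,N]^d)| ≤ c_d·N^{d-1} for a constant c_d > 0 depending only on d. -/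
/-!
Around each counted lattice point put the unit cube centred at it. These cubes are disjoint
of volume one, and since every point of `ℝ^d` lies within `√d / 2` of its rounding, their union
contains the inner region `B(0, R) ∩ [-M, M]^d` with `R = r - √d/2`, `M = N - 1/2` and is
contained in the outer region `B(0, R') ∩ [-M', M']^d` with `R' = r + √d/2`, `M' = N + 1/2`.
The true volume lies between the same two, so everything reduces to the volume of the
difference of these regions. Shrinking the outer one by `t = min (R / R') (M / M')` puts it
inside the inner one, so the difference is at most `(1 - t ^ d) Vol ≤ d (1 - t) Vol`, and with
`Vol ≤ (2R')^d, (2M')^d` this is `O(N ^ (d - 1))` because `R' ≤ 2√d N`.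
-/

open MeasureTheory
open scoped Pointwise

namespace LatticeCount

variable {d : ℕ}

lemma sqrt_sum_sq_eq_norm (x : Fin d → ℝ) : √(∑ i, x i ^ 2) = ‖WithLp.toLp 2 x‖ := by
  simp [EuclideanSpace.norm_eq]

def region (d : ℕ) (R M : ℝ) : Set (Fin d → ℝ) :=
  {x | (∀ i, |x i| ≤ M) ∧ √(∑ i, x i ^ 2) < R}

lemma region_mono {R R' M M' : ℝ} (hR : R ≤ R') (hM : M ≤ M') : region d R M ⊆ region d R' M' :=
  fun _ hx => ⟨fun i => (hx.1 i).trans hM, hx.2.trans_le hR⟩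

lemma region_eq_empty {R : ℝ} (hR : R ≤ 0) (M : ℝ) : region d R M = ∅ :=
  Set.eq_empty_of_forall_notMem fun _ hx => (hx.2.trans_le hR).not_ge (Real.sqrt_nonneg _)

lemma region_subset_pi_Icc (R M : ℝ) :
    region d R M ⊆ Set.univ.pi fun _ => Set.Icc (-M) M :=
  fun _ hx i _ => abs_le.mp (hx.1 i)

lemma region_subset_pi_Icc_radius (R M : ℝ) :
    region d R M ⊆ Set.univ.pi fun _ => Set.Icc (-R) R := by
  intro x hx i _
  refine abs_le.mp (le_of_lt (lt_of_le_of_lt ?_ hx.2))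
  rw [sqrt_sum_sq_eq_norm]
  simpa using PiLp.norm_apply_le (WithLp.toLp 2 x) i

lemma volume_pi_Icc_neg_self (a : ℝ) (ha : 0 ≤ a) :
    volume (Set.univ.pi fun _ : Fin d => Set.Icc (-a) a) = ENNReal.ofReal ((2 * a) ^ d) := by
  rw [volume_pi_pi, Real.volume_Icc, Finset.prod_const, Finset.card_univ, Fintype.card_fin,
    ← ENNReal.ofReal_pow (by linarith)]
  ring_nf

lemma volume_region_ne_top (R : ℝ) {M : ℝ} (hM : 0 ≤ M) : volume (region d R M) ≠ ⊤ :=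
  ne_top_of_le_ne_top ENNReal.ofReal_ne_top
    ((measure_mono (region_subset_pi_Icc R M)).trans_eq (volume_pi_Icc_neg_self M hM))

lemma volume_region_toReal_le_box (R : ℝ) {M : ℝ} (hM : 0 ≤ M) :
    (volume (region d R M)).toReal ≤ (2 * M) ^ d :=
  ENNReal.toReal_le_of_le_ofReal (by positivity)
    ((measure_mono (region_subset_pi_Icc R M)).trans_eq (volume_pi_Icc_neg_self M hM))

lemma volume_region_toReal_le_ball {R : ℝ} (hR : 0 ≤ R) (M : ℝ) :
    (volume (region d R M)).toReal ≤ (2 * R) ^ d :=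
  ENNReal.toReal_le_of_le_ofReal (by positivity)
    ((measure_mono (region_subset_pi_Icc_radius R M)).trans_eq (volume_pi_Icc_neg_self R hR))

lemma smul_region {t : ℝ} (ht : 0 < t) (R M : ℝ) : t • region d R M = region d (t * R) (t * M) := by
  ext x
  rw [Set.mem_smul_set_iff_inv_smul_mem₀ ht.ne']
  simp only [region, Set.mem_ofPred_eq, Pi.smul_apply, smul_eq_mul, sqrt_sum_sq_eq_norm]
  rw [show WithLp.toLp 2 (t⁻¹ • x) = t⁻¹ • WithLp.toLp 2 x from rfl, norm_smul]
  simp only [abs_mul, Real.norm_eq_abs, abs_inv, abs_of_pos ht, inv_mul_le_iff₀ ht,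
    inv_mul_lt_iff₀ ht]

lemma pow_mul_volume_region_le {t R R' M M' : ℝ} (ht : 0 < t) (hR : t * R' ≤ R)
    (hM : t * M' ≤ M) (hM' : 0 ≤ M') :
    t ^ d * (volume (region d R' M')).toReal ≤ (volume (region d R M)).toReal := by
  have hsub : volume (t • region d R' M') ≤ volume (region d R M) :=
    measure_mono (by rw [smul_region ht]; exact region_mono hR hM)
  rw [Measure.addHaar_smul_of_nonneg volume ht.le, Module.finrank_fin_fun] at hsub
  have := ENNReal.toReal_mono (volume_region_ne_top R (by nlinarith)) hsub
  rwa [ENNReal.toReal_mul, ENNReal.toReal_ofReal (by positivity)] at this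

lemma one_sub_min_div_le {a a' b b' : ℝ} (ha : a ≤ a') (ha' : 0 < a') (hb : b ≤ b')
    (hb' : 0 < b') : 1 - min (a / a') (b / b') ≤ (a' - a) / a' + (b' - b) / b' := by
  have hA : 1 - a / a' = (a' - a) / a' := by field_simp
  have hB : 1 - b / b' = (b' - b) / b' := by field_simp
  have hA0 : 0 ≤ (a' - a) / a' := div_nonneg (by linarith) ha'.le
  have hB0 : 0 ≤ (b' - b) / b' := div_nonneg (by linarith) hb'.le
  rcases min_cases (a / a') (b / b') with ⟨h, -⟩ | ⟨h, -⟩ <;> rw [h] <;> linarith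

lemma volume_region_sub_le (hd : 1 ≤ d) {R R' M M' : ℝ} (hR' : 0 < R') (hRR' : R ≤ R')
    (hM : 0 < M) (hMM' : M ≤ M') :
    (volume (region d R' M')).toReal - (volume (region d R M)).toReal ≤
      d * 2 ^ d * ((R' - R) * R' ^ (d - 1) + (M' - M) * M' ^ (d - 1)) := by
  set V' := (volume (region d R' M')).toReal
  have hV' : 0 ≤ V' := ENNReal.toReal_nonneg
  have hd' : (1 : ℝ) ≤ d := by exact_mod_cast hd
  have two_mul_pow (a : ℝ) : (2 * a) ^ d = 2 ^ d * a ^ (d - 1) * a := by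
    rw [mul_assoc, ← pow_succ, Nat.sub_add_cancel hd, mul_pow]
  have hM' : 0 < M' := hM.trans_le hMM'
  have hRpow : 0 ≤ 2 ^ d * R' ^ (d - 1) := by positivity
  have hMterm : 0 ≤ (M' - M) * M' ^ (d - 1) := mul_nonneg (by linarith) (by positivity)
  rcases le_or_gt R 0 with hR | hR
  · rw [region_eq_empty hR, measure_empty, ENNReal.toReal_zero, sub_zero]
    calc V' ≤ 2 ^ d * R' ^ (d - 1) * R' := two_mul_pow R' ▸ volume_region_toReal_le_ball hR'.le M'
      _ ≤ 1 * 2 ^ d * ((R' - R) * R' ^ (d - 1)) := by nlinarith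
      _ ≤ d * 2 ^ d * ((R' - R) * R' ^ (d - 1) + (M' - M) * M' ^ (d - 1)) := by
        gcongr
        linarith
  set t := min (R / R') (M / M')
  have ht : 0 < t := lt_min (by positivity) (div_pos hM (by linarith))
  have hscale : t ^ d * V' ≤ (volume (region d R M)).toReal :=
    pow_mul_volume_region_le ht ((mul_le_mul_of_nonneg_right (min_le_left _ _) hR'.le).trans_eq
        (div_mul_cancel₀ R hR'.ne'))
      ((mul_le_mul_of_nonneg_right (min_le_right _ _) (by linarith)).trans_eq
        (div_mul_cancel₀ M (by linarith))) (by linarith)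
  have hbernoulli : 1 - t ^ d ≤ d * (1 - t) := by
    have := one_add_mul_sub_le_pow (show -1 ≤ t by linarith) d
    linarith
  have h1t := one_sub_min_div_le hRR' hR' hMM' hM'
  calc V' - (volume (region d R M)).toReal ≤ (1 - t ^ d) * V' := by linarith
    _ ≤ d * (1 - t) * V' := mul_le_mul_of_nonneg_right hbernoulli hV'
    _ ≤ d * ((R' - R) / R' * V' + (M' - M) / M' * V') := by
      rw [mul_assoc, ← add_mul]; gcongr
    _ ≤ d * ((R' - R) / R' * (2 * R') ^ d + (M' - M) / M' * (2 * M') ^ d) := by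
      have hA : 0 ≤ (R' - R) / R' := div_nonneg (by linarith) hR'.le
      have hB : 0 ≤ (M' - M) / M' := div_nonneg (by linarith) hM'.le
      gcongr
      · exact volume_region_toReal_le_ball hR'.le M'
      · exact volume_region_toReal_le_box R' hM'.le
    _ = d * 2 ^ d * ((R' - R) * R' ^ (d - 1) + (M' - M) * M' ^ (d - 1)) := by
      rw [two_mul_pow, two_mul_pow]
      field_simp

def unitCube (z : Fin d → ℤ) : Set (Fin d → ℝ) :=
  Set.univ.pi fun i => Set.Ico ((z i : ℝ) - 1 / 2) (z i + 1 / 2)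

lemma mem_unitCube_iff {z : Fin d → ℤ} {x : Fin d → ℝ} :
    x ∈ unitCube z ↔ ∀ i, round (x i) = z i := by
  simp [unitCube, round_eq_iff]

lemma volume_unitCube (z : Fin d → ℤ) : volume (unitCube z) = 1 := by
  simp only [unitCube, volume_pi_pi, Real.volume_Ico]
  norm_num

lemma volume_biUnion_unitCube {s : Set (Fin d → ℤ)} (hs : s.Finite) :
    volume (⋃ z ∈ s, unitCube z) = s.ncard := by
  lift s to Finset (Fin d → ℤ) using hs
  have hdisj : (s : Set (Fin d → ℤ)).PairwiseDisjoint unitCube := by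
    refine fun z _ w _ hzw => Set.disjoint_left.mpr fun x hz hw => hzw (funext fun i => ?_)
    rw [← mem_unitCube_iff.mp hz i, mem_unitCube_iff.mp hw i]
  rw [Finset.set_biUnion_coe,
    measure_biUnion_finset hdisj fun z _ => MeasurableSet.univ_pi fun _ => measurableSet_Ico]
  simp [volume_unitCube]

lemma abs_sqrt_sum_sq_sub_le {x y : Fin d → ℝ} (h : ∀ i, |x i - y i| ≤ 1 / 2) :
    |√(∑ i, x i ^ 2) - √(∑ i, y i ^ 2)| ≤ √d / 2 := by
  rw [sqrt_sum_sq_eq_norm, sqrt_sum_sq_eq_norm]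
  refine (abs_norm_sub_norm_le _ _).trans ?_
  rw [← WithLp.toLp_sub, ← sqrt_sum_sq_eq_norm]
  calc √(∑ i, (x - y) i ^ 2) ≤ √(∑ _i : Fin d, (1 / 2 : ℝ) ^ 2) :=
        Real.sqrt_le_sqrt <| Finset.sum_le_sum fun i _ =>
          sq_le_sq' (abs_le.mp (h i)).1 (abs_le.mp (h i)).2
    _ = √d / 2 := by
      rw [Finset.sum_const, Finset.card_univ, Fintype.card_fin, nsmul_eq_mul,
        Real.sqrt_mul (Nat.cast_nonneg d), Real.sqrt_sq (by norm_num)]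
      ring

def latticePoints (d : ℕ) (R M : ℝ) : Set (Fin d → ℤ) :=
  {z | (fun i => (z i : ℝ)) ∈ region d R M}

lemma latticePoints_finite (R M : ℝ) : (latticePoints d R M).Finite := by
  refine (Set.Finite.pi fun _ => Set.finite_Icc (-⌈M⌉) ⌈M⌉).subset fun z hz i _ => ?_
  obtain ⟨hlo, hhi⟩ := abs_le.mp (hz.1 i)
  constructor
  · have : ((-⌈M⌉ : ℤ) : ℝ) ≤ z i := by push_cast; linarith [Int.le_ceil M]
    exact_mod_cast this
  · exact Int.cast_le.mp (hhi.trans (Int.le_ceil M))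

lemma biUnion_unitCube_subset_region (R M : ℝ) :
    ⋃ z ∈ latticePoints d R M, unitCube z ⊆ region d (R + √d / 2) (M + 1 / 2) := by
  simp only [Set.iUnion_subset_iff]
  intro z hz x hx
  have hround := mem_unitCube_iff.mp hx
  have hclose (i : Fin d) : |x i - z i| ≤ 1 / 2 := hround i ▸ abs_sub_round (x i)
  refine ⟨fun i => ?_, ?_⟩
  · linarith [abs_sub_abs_le_abs_sub (x i) (z i), hz.1 i, hclose i]
  · linarith [abs_le.mp (abs_sqrt_sum_sq_sub_le hclose), hz.2]

lemma region_subset_biUnion_unitCube (R M : ℝ) :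
    region d (R - √d / 2) (M - 1 / 2) ⊆ ⋃ z ∈ latticePoints d R M, unitCube z := by
  intro x hx
  have hclose (i : Fin d) : |(round (x i) : ℝ) - x i| ≤ 1 / 2 := by
    rw [abs_sub_comm]; exact abs_sub_round (x i)
  refine Set.mem_biUnion (x := fun i => round (x i)) ⟨fun i => ?_, ?_⟩
    (mem_unitCube_iff.mpr fun _ => rfl)
  · linarith [abs_sub_abs_le_abs_sub (round (x i) : ℝ) (x i), hx.1 i, hclose i]
  · linarith [abs_le.mp (abs_sqrt_sum_sq_sub_le hclose), hx.2]

lemma volume_region_toReal_le_ncard (R M : ℝ) :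
    (volume (region d (R - √d / 2) (M - 1 / 2))).toReal ≤ (latticePoints d R M).ncard := by
  have h := (measure_mono (region_subset_biUnion_unitCube (d := d) R M)).trans_eq
    (volume_biUnion_unitCube (latticePoints_finite R M))
  simpa using ENNReal.toReal_mono (ENNReal.natCast_ne_top _) h

lemma ncard_le_volume_region_toReal (R : ℝ) {M : ℝ} (hM : 0 ≤ M) :
    ((latticePoints d R M).ncard : ℝ) ≤ (volume (region d (R + √d / 2) (M + 1 / 2))).toReal := by
  have h := (volume_biUnion_unitCube (latticePoints_finite (d := d) R M)).symm.trans_le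
    (measure_mono (biUnion_unitCube_subset_region R M))
  simpa using ENNReal.toReal_mono (volume_region_ne_top _ (by linarith)) h

lemma abs_ncard_latticePoints_sub_volume_le (hd : 1 ≤ d) {R M : ℝ} (hR : 0 < R)
    (hM : 1 / 2 < M) :
    |((latticePoints d R M).ncard : ℝ) - (volume (region d R M)).toReal| ≤
      d * 2 ^ d * (√d * (R + √d / 2) ^ (d - 1) + (M + 1 / 2) ^ (d - 1)) := by
  have hs : 0 ≤ √(d : ℝ) := Real.sqrt_nonneg _
  have hinner := volume_region_toReal_le_ncard (d := d) R M
  have houter := ncard_le_volume_region_toReal (d := d) R (by linarith : 0 ≤ M)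
  have hvol_inner : (volume (region d (R - √d / 2) (M - 1 / 2))).toReal ≤
      (volume (region d R M)).toReal :=
    ENNReal.toReal_mono (volume_region_ne_top _ (by linarith))
      (measure_mono (region_mono (by linarith) (by linarith)))
  have hvol_outer : (volume (region d R M)).toReal ≤
      (volume (region d (R + √d / 2) (M + 1 / 2))).toReal :=
    ENNReal.toReal_mono (volume_region_ne_top _ (by linarith))
      (measure_mono (region_mono (by linarith) (by linarith)))
  have hshell := volume_region_sub_le hd (R := R - √d / 2) (R' := R + √d / 2) (M := M - 1 / 2)
    (M' := M + 1 / 2) (by positivity) (by linarith) (by linarith) (by linarith)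
  calc _ ≤ (volume (region d (R + √d / 2) (M + 1 / 2))).toReal -
        (volume (region d (R - √d / 2) (M - 1 / 2))).toReal :=
        abs_sub_le_iff.mpr ⟨by linarith, by linarith⟩
    _ ≤ _ := hshell.trans_eq (by ring)

end LatticeCount

open LatticeCount

/-- The number `W` of lattice points of `ℤ^d ∩ [-N,N]^d` in the open
ball `B(0,r)` (with `0 < r ≤ √d N`) differs from `Vol(B(0,r) ∩ [-N,N]^d)` by at
most `c_d N^{d-1}` for a dimensional constant `c_d`. -/
theorem stmt_6 (d : ℕ) (hd : 1 ≤ d) :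
    ∃ c : ℝ, 0 < c ∧ ∀ N : ℕ, 1 ≤ N → ∀ r : ℝ, 0 < r → r ≤ Real.sqrt d * N →
      |(({z : Fin d → ℤ | (∀ i, |z i| ≤ (N : ℤ)) ∧
            Real.sqrt (∑ i, (z i : ℝ) ^ 2) < r}).ncard : ℝ)
        - (volume {x : Fin d → ℝ | (∀ i, |x i| ≤ (N : ℝ)) ∧
            Real.sqrt (∑ i, x i ^ 2) < r}).toReal|
        ≤ c * (N : ℝ) ^ (d - 1) := by
  set s := √(d : ℝ)
  have hd' : (0 : ℝ) < d := by exact_mod_cast hd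
  have hs : 0 < s := Real.sqrt_pos.mpr hd'
  refine ⟨d * 2 ^ d * (s * (2 * s) ^ (d - 1) + 2 ^ (d - 1)), by positivity, ?_⟩
  intro N hN r hr hrN
  have hN' : (1 : ℝ) ≤ N := by exact_mod_cast hN
  have hlattice : {z : Fin d → ℤ | (∀ i, |z i| ≤ (N : ℤ)) ∧ √(∑ i, (z i : ℝ) ^ 2) < r} =
      latticePoints d r N := by
    ext z
    refine and_congr_left' (forall_congr' fun i => ?_)
    rw [← Int.cast_abs]
    norm_cast
  rw [hlattice]
  change |((latticePoints d r N).ncard : ℝ) - (volume (region d r N)).toReal| ≤ _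
  calc _ ≤ d * 2 ^ d * (s * (r + s / 2) ^ (d - 1) + (N + 1 / 2) ^ (d - 1)) :=
        abs_ncard_latticePoints_sub_volume_le hd hr (by linarith)
    _ ≤ d * 2 ^ d * (s * (2 * s * N) ^ (d - 1) + (2 * N) ^ (d - 1)) := by
      gcongr <;> nlinarith
    _ = d * 2 ^ d * (s * (2 * s) ^ (d - 1) + 2 ^ (d - 1)) * N ^ (d - 1) := by
      rw [mul_pow, mul_pow]
      ring
end

section
/- Let (Wₖ⁽ⁿ⁾ : k ∈ [n]) be a triangular array of i.i.d. nonnegative random variables with 0 ≤ W⁽ⁿ⁾ ≤ n, Lᵖ-bounded for all 1 ≤ p < α with α > 1, and E[W⁽ⁿ⁾] = μₙ → μ. Then there exists a sequence ζₙ ↓ 0 such that Sₙ := W₁⁽ⁿ⁾ + ⋯ + Wₙ⁽ⁿ⁾ satisfies P(|Sₙ - n·μ| > ζₙ·n) ≤ ζₙ for all n. -/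
/-!
Fix an exponent `1 < p < min α 2`. Since `0 ≤ W⁽ⁿ⁾ ≤ n`, one has `(W⁽ⁿ⁾)² ≤ n^(2-p) (W⁽ⁿ⁾)^p`,
so `Var Sₙ ≤ n · n^(2-p) · sup_m E[(W⁽ᵐ⁾)^p]`, and Chebyshev's inequality together with
`μₙ → μ` bounds `P(|Sₙ - nμ| > εn)` by a multiple of `n^(1-p) / ε²`, which tends to zero for
each fixed `ε > 0`. A diagonal choice of `ε` along `n` then produces `ζₙ`.
-/

open MeasureTheory Filter Topology ProbabilityTheory

theorem exists_antitone_tendsto_zero_of_eventually {q : ℕ → ℝ → Prop}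
    (hq : ∀ ε > 0, ∀ᶠ n in atTop, q n ε) (hq_one : ∀ n, q n 1) :
    ∃ ζ : ℕ → ℝ, (∀ n, 0 < ζ n) ∧ Antitone ζ ∧ Tendsto ζ atTop (𝓝 0) ∧ ∀ n, q n (ζ n) := by
  choose N hN using fun k : ℕ =>
    eventually_atTop.1 ((hq (1 / ((k : ℝ) + 1)) (by positivity)).and (eventually_ge_atTop k))
  set K : ℕ → ℕ := fun n => Nat.findGreatest (fun k => N k ≤ n) n
  have hK_mono : Monotone K := fun a b hab =>
    Nat.findGreatest_mono (fun k hk => hk.trans hab) hab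
  have hK_tendsto : Tendsto K atTop atTop := tendsto_atTop_atTop.2 fun k =>
    ⟨N k, fun n hn => Nat.le_findGreatest ((hN k (N k) le_rfl).2.trans hn) hn⟩
  refine ⟨fun n => 1 / ((K n : ℝ) + 1), fun n => by positivity, fun a b hab => ?_,
    tendsto_one_div_add_atTop_nhds_zero_nat.comp hK_tendsto, fun n => ?_⟩
  · dsimp only
    gcongr
    exact hK_mono hab
  · by_cases hK0 : K n = 0
    · simpa [hK0] using hq_one n
    · exact (hN (K n) n (Nat.findGreatest_of_ne_zero (P := fun k => N k ≤ n) rfl hK0)).1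

theorem sq_le_rpow_sub_mul_rpow {x M p : ℝ} (hx : 0 ≤ x) (hxM : x ≤ M) (hp : p ≤ 2) :
    x ^ 2 ≤ M ^ (2 - p) * x ^ p := by
  rcases hx.eq_or_lt with rfl | hx
  · simpa using mul_nonneg (Real.rpow_nonneg hxM _) (Real.rpow_nonneg le_rfl p)
  calc x ^ 2 = x ^ (2 - p) * x ^ p := by
        rw [← Real.rpow_add hx, sub_add_cancel, Real.rpow_two]
    _ ≤ M ^ (2 - p) * x ^ p := by gcongr

section Moments

variable {Ω : Type*} [MeasurableSpace Ω] {P : Measure Ω}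

theorem memLp_of_ae_mem_Icc [IsFiniteMeasure P] {X : Ω → ℝ} {M : ℝ} (hX : AEMeasurable X P)
    (hXM : ∀ᵐ ω ∂P, X ω ∈ Set.Icc 0 M) (q : ENNReal) : MemLp X q P :=
  MemLp.of_bound hX.aestronglyMeasurable M <| hXM.mono fun _ hω => by
    rw [Real.norm_of_nonneg hω.1]
    exact hω.2

theorem integral_sq_le_rpow_sub_mul_integral_rpow [IsFiniteMeasure P] {X : Ω → ℝ} {M p : ℝ}
    (hX : AEMeasurable X P) (hXM : ∀ᵐ ω ∂P, X ω ∈ Set.Icc 0 M) (hp0 : 0 ≤ p) (hp2 : p ≤ 2) :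
    ∫ ω, X ω ^ 2 ∂P ≤ M ^ (2 - p) * ∫ ω, X ω ^ p ∂P := by
  have hint : Integrable (fun ω => X ω ^ p) P :=
    Integrable.of_bound (hX.pow_const p).aestronglyMeasurable (M ^ p) <| hXM.mono fun _ hω => by
      rw [Real.norm_of_nonneg (Real.rpow_nonneg hω.1 p)]
      exact Real.rpow_le_rpow hω.1 hω.2 hp0
  rw [← integral_const_mul]
  exact integral_mono_of_nonneg (ae_of_all _ fun _ => sq_nonneg _) (hint.const_mul _)
    (hXM.mono fun _ hω => sq_le_rpow_sub_mul_rpow hω.1 hω.2 hp2)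

theorem variance_sum_le_of_ae_mem_Icc [IsProbabilityMeasure P] {ι : Type*} [Fintype ι]
    {X : ι → Ω → ℝ} {M p C : ℝ} (hX : ∀ i, AEMeasurable (X i) P)
    (hXM : ∀ i, ∀ᵐ ω ∂P, X i ω ∈ Set.Icc 0 M) (hindep : Pairwise fun i j => X i ⟂ᵢ[P] X j)
    (hp0 : 0 ≤ p) (hp2 : p ≤ 2) (hC : ∀ i, ∫ ω, X i ω ^ p ∂P ≤ C) :
    variance (fun ω => ∑ i, X i ω) P ≤ Fintype.card ι * (M ^ (2 - p) * C) := by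
  have hmem i : MemLp (X i) 2 P := memLp_of_ae_mem_Icc (hX i) (hXM i) 2
  have hvar i : variance (X i) P ≤ M ^ (2 - p) * C := by
    obtain ⟨ω, hω⟩ := (hXM i).exists
    calc variance (X i) P ≤ ∫ ω, X i ω ^ 2 ∂P := variance_le_expectation_sq (hmem i).1
      _ ≤ M ^ (2 - p) * ∫ ω, X i ω ^ p ∂P :=
        integral_sq_le_rpow_sub_mul_integral_rpow (hX i) (hXM i) hp0 hp2
      _ ≤ M ^ (2 - p) * C := by
        gcongr
        · exact Real.rpow_nonneg (hω.1.trans hω.2) _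
        · exact hC i
  rw [← Finset.sum_fn, IndepFun.variance_sum (fun i _ => hmem i)
    (fun i _ j _ hij => hindep hij)]
  simpa using Finset.sum_le_sum fun i (_ : i ∈ Finset.univ) => hvar i

theorem measure_lt_abs_sub_le_variance_div_sq [IsFiniteMeasure P] {Y : Ω → ℝ} (hY : MemLp Y 2 P)
    {m c r : ℝ} (hc : 0 < c) (hm : |P[Y] - m| + c ≤ r) :
    P {ω | r < |Y ω - m|} ≤ ENNReal.ofReal (variance Y P / c ^ 2) :=
  (measure_mono fun ω (hω : r < |Y ω - m|) => show c ≤ |Y ω - P[Y]| by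
    linarith [abs_sub_le (Y ω) P[Y] m]).trans (meas_ge_le_variance_div_sq hY hc)

theorem toReal_measure_abs_sum_sub_gt_le [IsProbabilityMeasure P] {n : ℕ} (hn : 0 < n)
    {X : Fin n → Ω → ℝ} {Y : Ω → ℝ} {p C μ ε : ℝ} (hX : ∀ i, AEMeasurable (X i) P)
    (hXn : ∀ i, ∀ᵐ ω ∂P, X i ω ∈ Set.Icc (0 : ℝ) n) (hindep : iIndepFun X P)
    (hident : ∀ i, IdentDistrib (X i) Y P P) (hp0 : 0 ≤ p) (hp2 : p ≤ 2)
    (hC : ∫ ω, Y ω ^ p ∂P ≤ C) (hε : 0 < ε) (hμ : |∫ ω, Y ω ∂P - μ| ≤ ε / 2) :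
    (P {ω | |(∑ i, X i ω) - n * μ| > ε * n}).toReal ≤ 4 * C / ε ^ 2 * (n : ℝ) ^ (1 - p) := by
  have hn0 : (0 : ℝ) < n := by exact_mod_cast hn
  have hmem i : MemLp (X i) 2 P := memLp_of_ae_mem_Icc (hX i) (hXn i) 2
  have hmean : P[fun ω => ∑ i, X i ω] = n * ∫ ω, Y ω ∂P := by
    simp [integral_finsetSum _ fun i _ => (hmem i).integrable one_le_two, (hident _).integral_eq]
  have hpow i : ∫ ω, X i ω ^ p ∂P = ∫ ω, Y ω ^ p ∂P :=
    ((hident i).comp (u := fun x : ℝ => x ^ p) (by fun_prop)).integral_eq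
  have hvar : variance (fun ω => ∑ i, X i ω) P ≤ n * (n ^ (2 - p) * C) := by
    simpa using variance_sum_le_of_ae_mem_Icc hX hXn (fun i j hij => hindep.indepFun hij)
      hp0 hp2 fun i => (hpow i).trans_le hC
  have hchebyshev := measure_lt_abs_sub_le_variance_div_sq (memLp_finsetSum _ fun i _ => hmem i)
    (by positivity : 0 < ε * n / 2) (m := n * μ) (r := ε * n) (by
      rw [hmean, ← mul_sub, abs_mul, Nat.abs_cast]
      linarith [mul_le_mul_of_nonneg_left hμ hn0.le])
  calc (P {ω | |(∑ i, X i ω) - n * μ| > ε * n}).toReal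
      ≤ variance (fun ω => ∑ i, X i ω) P / (ε * n / 2) ^ 2 :=
        ENNReal.toReal_le_of_le_ofReal (div_nonneg (variance_nonneg _ _) (sq_nonneg _))
          hchebyshev
    _ ≤ n * (n ^ (2 - p) * C) / (ε * n / 2) ^ 2 := by gcongr
    _ = 4 * C / ε ^ 2 * (n : ℝ) ^ (1 - p) := by
        rw [show (2 : ℝ) - p = 1 - p + 1 by ring, Real.rpow_add_one hn0.ne']
        field_simp
        ring

end Moments

theorem eventually_toReal_measure_abs_sum_sub_gt_le {Ω : Type*} [MeasurableSpace Ω]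
    {P : Measure Ω} [IsProbabilityMeasure P] {W : (n : ℕ) → Fin n → Ω → ℝ} {W0 : ℕ → Ω → ℝ}
    {p C μ : ℝ} (hmeas : ∀ n i, Measurable (W n i))
    (hrange : ∀ (n : ℕ) i ω, W n i ω ∈ Set.Icc (0 : ℝ) n) (hindep : ∀ n, iIndepFun (W n) P)
    (hident : ∀ n i, IdentDistrib (W n i) (W0 n) P P) (hp1 : 1 < p) (hp2 : p ≤ 2)
    (hC : ∀ n, ∫ ω, W0 n ω ^ p ∂P ≤ C) (hmean : Tendsto (fun n => ∫ ω, W0 n ω ∂P) atTop (𝓝 μ))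
    {ε : ℝ} (hε : 0 < ε) :
    ∀ᶠ n in atTop, (P {ω | |(∑ i, W n i ω) - n * μ| > ε * n}).toReal ≤ ε := by
  have hdecay : Tendsto (fun n : ℕ => 4 * C / ε ^ 2 * (n : ℝ) ^ (1 - p)) atTop (𝓝 0) := by
    have := ((tendsto_rpow_neg_atTop (by linarith : 0 < p - 1)).comp
      tendsto_natCast_atTop_atTop).const_mul (4 * C / ε ^ 2)
    simpa [Function.comp_def] using this
  filter_upwards [eventually_gt_atTop 0, Metric.tendsto_nhds.1 hmean (ε / 2) (by positivity),
    hdecay.eventually (eventually_le_nhds hε)] with n hn hμn hsmall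
  refine (toReal_measure_abs_sum_sub_gt_le hn (fun i => (hmeas n i).aemeasurable)
    (fun i => ae_of_all P (hrange n i)) (hindep n) (hident n) (by linarith) hp2 (hC n) hε
    ?_).trans hsmall
  rw [← Real.dist_eq]
  exact hμn.le

theorem stmt_7_general {Ω : Type*} [MeasureSpace Ω] [IsProbabilityMeasure (volume : Measure Ω)]
    (α : ℝ) (hα : 1 < α) (μ : ℝ)
    (W : (n : ℕ) → Fin n → Ω → ℝ) (W0 : ℕ → Ω → ℝ)
    (hmeas : ∀ n i, Measurable (W n i)) (hmeas0 : ∀ n, Measurable (W0 n))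
    (hrange : ∀ (n : ℕ) (i) (ω), W n i ω ∈ Set.Icc (0:ℝ) (n:ℝ))
    (hindep : ∀ n, iIndepFun (W n) volume)
    (hdist : ∀ n i, Measure.map (W n i) volume = Measure.map (W0 n) volume)
    (hLp : ∀ p : ℝ, 1 ≤ p → p < α → ∃ C : ℝ, ∀ n, ∫ ω, (W0 n ω) ^ p ≤ C)
    (hmean : Tendsto (fun n => ∫ ω, W0 n ω) atTop (𝓝 μ)) :
    ∃ ζ : ℕ → ℝ, (∀ n, 0 < ζ n) ∧ Antitone ζ ∧ Tendsto ζ atTop (𝓝 0) ∧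
      ∀ n : ℕ, (volume {ω | |(∑ i, W n i ω) - n * μ| > ζ n * n}).toReal ≤ ζ n := by
  obtain ⟨p, hp1, hp⟩ := exists_between (lt_min hα one_lt_two)
  obtain ⟨C, hC⟩ := hLp p hp1.le (hp.trans_le (min_le_left _ _))
  have hident n i : IdentDistrib (W n i) (W0 n) :=
    ⟨(hmeas n i).aemeasurable, (hmeas0 n).aemeasurable, hdist n i⟩
  refine exists_antitone_tendsto_zero_of_eventually (fun ε hε =>
    eventually_toReal_measure_abs_sum_sub_gt_le hmeas hrange hindep hident hp1
      (hp.le.trans (min_le_right _ _)) hC hmean hε) fun n => ?_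
  exact ENNReal.toReal_le_of_le_ofReal zero_le_one (by simpa using prob_le_one)

/-- law of large numbers for the triangular array: there is `ζₙ ↓ 0`
with `P(|Sₙ - nμ| > ζₙ n) ≤ ζₙ`. -/
theorem stmt_7 {Ω : Type*} [MeasureSpace Ω] [IsProbabilityMeasure (volume : Measure Ω)]
    (α : ℝ) (hα : 1 < α) (μ : ℝ) (hμ0 : 0 ≤ μ)
    (W : (n : ℕ) → Fin n → Ω → ℝ) (W0 : ℕ → Ω → ℝ)
    (hmeas : ∀ n i, Measurable (W n i)) (hmeas0 : ∀ n, Measurable (W0 n))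
    (hrange : ∀ (n : ℕ) (i) (ω), W n i ω ∈ Set.Icc (0:ℝ) (n:ℝ))
    (hindep : ∀ n, iIndepFun (W n) volume)
    (hdist : ∀ n i, Measure.map (W n i) volume = Measure.map (W0 n) volume)
    (hLp : ∀ p : ℝ, 1 ≤ p → p < α → ∃ C : ℝ, ∀ n, ∫ ω, (W0 n ω) ^ p ≤ C)
    (hmean : Tendsto (fun n => ∫ ω, W0 n ω) atTop (𝓝 μ)) :
    ∃ ζ : ℕ → ℝ, (∀ n, 0 < ζ n) ∧ Antitone ζ ∧ Tendsto ζ atTop (𝓝 0) ∧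
      ∀ n : ℕ, (volume {ω | |(∑ i, W n i ω) - n * μ| > ζ n * n}).toReal ≤ ζ n :=
  stmt_7_general α hα μ W W0 hmeas hmeas0 hrange hindep hdist hLp hmean
end

section
/- Let Ŵ⁽ⁿ⁾ := W⁽ⁿ⁾·1{W⁽ⁿ⁾ ≤ εn} with 0 ≤ W⁽ⁿ⁾ ≤ n Lᵖ-bounded for all 1 ≤ p < α (α > 1), E[W⁽ⁿ⁾] = μₙ → μ, and s := a·log n / n with 0 < a < (α-1)/ε. Then E[exp(s·Ŵ⁽ⁿ⁾)] ≤ exp(s·(μₙ + o(1))) as n → ∞. -/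
open MeasureTheory Filter Topology Real

/-!
For `x ≥ 0`, `0 ≤ p ≤ 2` and `q ≥ 0` one has `exp x ≤ 1 + x + x ^ p + x ^ q * exp x` (split
at `x = 1`). Take `x = s Ŵ`; the truncation gives `exp (s Ŵ) ≤ exp (s ε n) = n ^ (a ε)`, so
integrating, `E exp (s Ŵ) ≤ 1 + s μₙ + s ^ p C_p + s ^ q n ^ (a ε) C_q ≤ exp (s (μₙ + e n))` with
`e n = s ^ (p - 1) C_p + s ^ (q - 1) n ^ (a ε) C_q`, where `C_r` bounds the `r`-th moments.
For `1 < p` and `1 + a ε < q < α` both terms of `e n` are powers of `log n` over positive powers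
of `n`, hence tend to `0`.
-/

theorem exp_le_one_add_add_rpow_add_rpow_mul_exp {x p q : ℝ} (hx : 0 ≤ x) (hp₀ : 0 ≤ p)
    (hp₂ : p ≤ 2) (hq : 0 ≤ q) : exp x ≤ 1 + x + x ^ p + x ^ q * exp x := by
  have hxp : 0 ≤ x ^ p := rpow_nonneg hx p
  have hxq : 0 ≤ x ^ q * exp x := by positivity
  rcases le_or_gt x 1 with hx₁ | hx₁
  · have hsq : x ^ 2 ≤ x ^ p := by
      rw [← rpow_two]; exact rpow_le_rpow_of_exponent_ge' hx hx₁ hp₀ hp₂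
    have := (abs_le.mp (abs_exp_sub_one_sub_id_le (abs_le.mpr ⟨by linarith, hx₁⟩))).2
    linarith
  · have : exp x ≤ x ^ q * exp x := le_mul_of_one_le_left (exp_pos x).le (one_le_rpow hx₁.le hq)
    linarith

theorem integrable_rpow_of_bounded {Ω : Type*} [MeasurableSpace Ω] {P : Measure Ω}
    [IsFiniteMeasure P] {Y : Ω → ℝ} (hY : Measurable Y) {M r : ℝ} (hY₀ : ∀ ω, 0 ≤ Y ω)
    (hYM : ∀ ω, Y ω ≤ M) (hr : 0 ≤ r) : Integrable (fun ω => Y ω ^ r) P :=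
  .of_bound (hY.pow_const r).aestronglyMeasurable (M ^ r) <| ae_of_all _ fun ω => by
    rw [norm_of_nonneg (rpow_nonneg (hY₀ ω) r)]
    exact rpow_le_rpow (hY₀ ω) (hYM ω) hr

theorem integral_exp_mul_le {Ω : Type*} [MeasurableSpace Ω] {P : Measure Ω}
    [IsProbabilityMeasure P] {Y : Ω → ℝ} (hY : Measurable Y) {M s p q : ℝ}
    (hY₀ : ∀ ω, 0 ≤ Y ω) (hYM : ∀ ω, Y ω ≤ M) (hs : 0 ≤ s) (hp₀ : 0 ≤ p) (hp₂ : p ≤ 2)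
    (hq : 0 ≤ q) :
    ∫ ω, exp (s * Y ω) ∂P ≤ 1 + s * (∫ ω, Y ω ∂P) + s ^ p * (∫ ω, Y ω ^ p ∂P)
      + s ^ q * exp (s * M) * (∫ ω, Y ω ^ q ∂P) := by
  have hpt : ∀ ω, exp (s * Y ω) ≤
      1 + s * Y ω + s ^ p * Y ω ^ p + s ^ q * exp (s * M) * Y ω ^ q := fun ω => by
    have hsY : 0 ≤ s * Y ω := mul_nonneg hs (hY₀ ω)
    have hexp : exp (s * Y ω) ≤ exp (s * M) := exp_le_exp.mpr (by gcongr; exact hYM ω)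
    calc exp (s * Y ω) ≤ 1 + s * Y ω + (s * Y ω) ^ p + (s * Y ω) ^ q * exp (s * Y ω) :=
          exp_le_one_add_add_rpow_add_rpow_mul_exp hsY hp₀ hp₂ hq
      _ ≤ 1 + s * Y ω + (s * Y ω) ^ p + (s * Y ω) ^ q * exp (s * M) := by gcongr
      _ = _ := by rw [mul_rpow hs (hY₀ ω), mul_rpow hs (hY₀ ω)]; ring
  have hYi : Integrable (fun ω => s * Y ω) P := by
    simpa using (integrable_rpow_of_bounded (P := P) hY hY₀ hYM zero_le_one).const_mul s
  have hYpi := (integrable_rpow_of_bounded (P := P) hY hY₀ hYM hp₀).const_mul (s ^ p)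
  have hYqi := (integrable_rpow_of_bounded (P := P) hY hY₀ hYM hq).const_mul
    (s ^ q * exp (s * M))
  have h₁ : Integrable (fun ω => 1 + s * Y ω) P := (integrable_const 1).add hYi
  have h₂ : Integrable (fun ω => 1 + s * Y ω + s ^ p * Y ω ^ p) P := h₁.add hYpi
  calc ∫ ω, exp (s * Y ω) ∂P
      ≤ ∫ ω, (1 + s * Y ω + s ^ p * Y ω ^ p + s ^ q * exp (s * M) * Y ω ^ q) ∂P :=
        integral_mono_of_nonneg (ae_of_all _ fun ω => (exp_pos _).le) (h₂.add hYqi)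
          (ae_of_all _ hpt)
    _ = _ := by
      rw [integral_add h₂ hYqi, integral_add h₁ hYpi, integral_add (integrable_const 1) hYi,
        integral_const_mul, integral_const_mul, integral_const_mul]
      simp

theorem integral_exp_mul_truncation_le {Ω : Type*} [MeasurableSpace Ω] {P : Measure Ω}
    [IsProbabilityMeasure P] {X : Ω → ℝ} (hX : Measurable X) {N c s p q : ℝ}
    (hX₀ : ∀ ω, 0 ≤ X ω) (hXN : ∀ ω, X ω ≤ N) (hc : 0 ≤ c) (hs : 0 ≤ s) (hp₀ : 0 ≤ p)
    (hp₂ : p ≤ 2) (hq : 0 ≤ q) :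
    ∫ ω, exp (s * if X ω ≤ c then X ω else 0) ∂P ≤ 1 + s * (∫ ω, X ω ∂P)
      + s ^ p * (∫ ω, X ω ^ p ∂P) + s ^ q * exp (s * c) * (∫ ω, X ω ^ q ∂P) := by
  set Y : Ω → ℝ := fun ω => if X ω ≤ c then X ω else 0 with hY_def
  have hY : Measurable Y :=
    Measurable.ite (measurableSet_le hX measurable_const) hX measurable_const
  have hY₀ : ∀ ω, 0 ≤ Y ω := fun ω => by
    simp only [hY_def]; split_ifs <;> linarith [hX₀ ω]
  have hYc : ∀ ω, Y ω ≤ c := fun ω => by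
    simp only [hY_def]; split_ifs <;> linarith
  have hYX : ∀ ω, Y ω ≤ X ω := fun ω => by
    simp only [hY_def]; split_ifs <;> linarith [hX₀ ω]
  have hmom : ∀ r : ℝ, 0 ≤ r → ∫ ω, Y ω ^ r ∂P ≤ ∫ ω, X ω ^ r ∂P := fun r hr =>
    integral_mono_of_nonneg (ae_of_all _ fun ω => rpow_nonneg (hY₀ ω) r)
      (integrable_rpow_of_bounded hX hX₀ hXN hr)
      (ae_of_all _ fun ω => rpow_le_rpow (hY₀ ω) (hYX ω) hr)
  have h₁ : ∫ ω, Y ω ∂P ≤ ∫ ω, X ω ∂P := by simpa using hmom 1 zero_le_one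
  have h₂ := hmom p hp₀
  have h₃ := hmom q hq
  calc ∫ ω, exp (s * Y ω) ∂P
      ≤ 1 + s * (∫ ω, Y ω ∂P) + s ^ p * (∫ ω, Y ω ^ p ∂P)
          + s ^ q * exp (s * c) * (∫ ω, Y ω ^ q ∂P) :=
        integral_exp_mul_le hY hY₀ hYc hs hp₀ hp₂ hq
    _ ≤ _ := by gcongr 1 + s * ?_ + s ^ p * ?_ + _ * ?_

theorem one_add_mul_add_rpow_mul_add_rpow_mul_le_exp {s m A B p q : ℝ} (hs : 0 ≤ s)
    (hp : p ≠ 0) (hq : q ≠ 0) :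
    1 + s * m + s ^ p * A + s ^ q * B ≤ exp (s * (m + (s ^ (p - 1) * A + s ^ (q - 1) * B))) := by
  have hsp : s ^ p = s * s ^ (p - 1) := by
    rw [← rpow_one_add' hs (by rwa [add_sub_cancel]), add_sub_cancel]
  have hsq : s ^ q = s * s ^ (q - 1) := by
    rw [← rpow_one_add' hs (by rwa [add_sub_cancel]), add_sub_cancel]
  calc 1 + s * m + s ^ p * A + s ^ q * B
      = s * (m + (s ^ (p - 1) * A + s ^ (q - 1) * B)) + 1 := by rw [hsp, hsq]; ring
    _ ≤ _ := add_one_le_exp _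

theorem tendsto_mul_log_div_rpow_mul_rpow_atTop {a c d : ℝ} (ha : 0 ≤ a) (hdc : d < c) :
    Tendsto (fun n : ℕ => (a * log n / n) ^ c * (n : ℝ) ^ d) atTop (𝓝 0) := by
  have h := (((isLittleO_log_rpow_rpow_atTop c (sub_pos.mpr hdc)).tendsto_div_nhds_zero).comp
    tendsto_natCast_atTop_atTop).const_mul (a ^ c)
  rw [mul_zero] at h
  refine h.congr' ?_
  filter_upwards [eventually_gt_atTop 0] with n hn
  have hn : (0 : ℝ) < n := Nat.cast_pos.mpr hn
  rw [Function.comp_apply, div_rpow (mul_nonneg ha (log_natCast_nonneg n)) hn.le,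
    mul_rpow ha (log_natCast_nonneg n), rpow_sub hn]
  field_simp

theorem stmt_11_general {Ω : Type*} [MeasureSpace Ω] [IsProbabilityMeasure (volume : Measure Ω)]
    (α : ℝ)
    (W : ℕ → Ω → ℝ) (hmeas : ∀ n, Measurable (W n))
    (hrange : ∀ (n : ℕ) (ω), W n ω ∈ Set.Icc (0:ℝ) (n:ℝ))
    (hLp : ∀ p : ℝ, 1 ≤ p → p < α → ∃ C : ℝ, ∀ n, ∫ ω, (W n ω) ^ p ≤ C)
    (ε a : ℝ) (hε : 0 < ε) (ha : 0 < a) (haε : a < (α - 1) / ε) :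
    ∃ e : ℕ → ℝ, Tendsto e atTop (𝓝 0) ∧
      ∀ n : ℕ, 1 ≤ n →
        (∫ ω, Real.exp ((a * Real.log n / n) *
            (if W n ω ≤ ε * n then W n ω else 0)))
          ≤ Real.exp ((a * Real.log n / n) * ((∫ ω, W n ω) + e n)) := by
  have haεα : 1 + a * ε < α := by linarith [(lt_div_iff₀ hε).mp haε]
  have haε₀ : 0 < a * ε := mul_pos ha hε
  obtain ⟨p, hp₁, hp₂, hpα⟩ : ∃ p : ℝ, 1 < p ∧ p ≤ 2 ∧ p < α :=
    ⟨min 2 ((1 + α) / 2), lt_min one_lt_two (by linarith), min_le_left _ _,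
      (min_le_right _ _).trans_lt (by linarith)⟩
  obtain ⟨q, hq₁, hqα⟩ : ∃ q : ℝ, 1 + a * ε < q ∧ q < α :=
    ⟨(1 + a * ε + α) / 2, by linarith, by linarith⟩
  have hq₀ : 0 < q := by linarith
  obtain ⟨Cp, hCp⟩ := hLp p hp₁.le hpα
  obtain ⟨Cq, hCq⟩ := hLp q (by linarith) hqα
  refine ⟨fun n => (a * log n / n) ^ (p - 1) * Cp + (a * log n / n) ^ (q - 1) * (n ^ (a * ε) * Cq),
    ?_, fun n hn => ?_⟩
  · simpa [mul_assoc] using ((tendsto_mul_log_div_rpow_mul_rpow_atTop (d := 0) ha.le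
      (sub_pos.mpr hp₁)).mul_const Cp).add
      ((tendsto_mul_log_div_rpow_mul_rpow_atTop ha.le (by linarith)).mul_const Cq)
  set s := a * log n / n with hs_def
  have hn₀ : (0 : ℝ) < n := by exact_mod_cast hn
  have hs : 0 ≤ s := by positivity
  have hexp : exp (s * (ε * n)) = n ^ (a * ε) := by
    rw [rpow_def_of_pos hn₀, hs_def]; congr 1; field_simp
  calc _ ≤ 1 + s * (∫ ω, W n ω) + s ^ p * (∫ ω, W n ω ^ p)
          + s ^ q * exp (s * (ε * n)) * (∫ ω, W n ω ^ q) :=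
        integral_exp_mul_truncation_le (hmeas n) (fun ω => (hrange n ω).1)
          (fun ω => (hrange n ω).2) (by positivity) hs (by linarith) hp₂ hq₀.le
    _ ≤ 1 + s * (∫ ω, W n ω) + s ^ p * Cp + s ^ q * (n ^ (a * ε) * Cq) := by
        rw [hexp, mul_assoc]
        gcongr
        exacts [hCp n, hCq n]
    _ ≤ _ := one_add_mul_add_rpow_mul_add_rpow_mul_le_exp hs (by linarith) hq₀.ne'

/-- with `Ŵ⁽ⁿ⁾ = W⁽ⁿ⁾·1{W⁽ⁿ⁾ ≤ εn}` and `s = a log n / n`,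
`0 < a < (α-1)/ε`, one has `E[exp(s Ŵ⁽ⁿ⁾)] ≤ exp(s(μₙ + o(1)))`. -/
theorem stmt_11 {Ω : Type*} [MeasureSpace Ω] [IsProbabilityMeasure (volume : Measure Ω)]
    (α : ℝ) (hα : 1 < α) (μ : ℝ)
    (W : ℕ → Ω → ℝ) (hmeas : ∀ n, Measurable (W n))
    (hrange : ∀ (n : ℕ) (ω), W n ω ∈ Set.Icc (0:ℝ) (n:ℝ))
    (hLp : ∀ p : ℝ, 1 ≤ p → p < α → ∃ C : ℝ, ∀ n, ∫ ω, (W n ω) ^ p ≤ C)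
    (hmean : Tendsto (fun n => ∫ ω, W n ω) atTop (𝓝 μ))
    (ε a : ℝ) (hε : 0 < ε) (ha : 0 < a) (haε : a < (α - 1) / ε) :
    ∃ e : ℕ → ℝ, Tendsto e atTop (𝓝 0) ∧
      ∀ n : ℕ, 1 ≤ n →
        (∫ ω, Real.exp ((a * Real.log n / n) *
            (if W n ω ≤ ε * n then W n ω else 0)))
          ≤ Real.exp ((a * Real.log n / n) * ((∫ ω, W n ω) + e n)) :=
  stmt_11_general α W hmeas hrange hLp ε a hε ha haε
end
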